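/- arXiv:1710.11414 — 2 statements merged into one kernel-verified Lean document; each statement's English description precedes it below -/
import Mathlib

section
/- Let T be a finite tree with an edge {u, v}, and suppose T has a minimum dominating set D such that u ∈ D or some neighbor of u inside the component T_u of T − {u,v} lies in D, and likewise v is dominated within T_v by D. Then D ∩ V(T_u) is a dominating set of T_u, D ∩ V(T_v) is a dominating set of T_v, and γ(T) = γ(T_u) + γ(T_v). -/
def DominatingSet {V : Type*} (G : SimpleGraph V) (D : Set V) : Prop :=
  ∀ v ∉ D, ∃ u ∈ D, G.Adj u v

noncomputable def dominationNumber {V : Type*} (G : SimpleGraph V) : ℕ :=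
  sInf {k : ℕ | ∃ D : Set V, DominatingSet G D ∧ D.ncard = k}

/-!
Removing the bridge `uv` splits the tree into the two sides `T_u` and `T_v`. Gluing minimum
dominating sets of the sides always dominates `T`, so `γ(T) ≤ γ(T_u) + γ(T_v)`. Conversely, when
neither endpoint relies on the edge `uv` to be dominated by `D`, no vertex does, so `D` splits into
dominating sets of the two sides and `γ(T_u) + γ(T_v) ≤ |D| = γ(T)`.
-/

open SimpleGraph

theorem Set.ncard_preimage_val {α : Type*} (S D : Set α) :
    (Subtype.val ⁻¹' D : Set S).ncard = (S ∩ D).ncard := by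
  rw [← Set.ncard_image_of_injective _ Subtype.val_injective, Subtype.image_preimage_coe]

theorem Set.ncard_preimage_val_add_of_isCompl {α : Type*} [Finite α] {S T : Set α}
    (h : IsCompl S T) (D : Set α) :
    (Subtype.val ⁻¹' D : Set S).ncard + (Subtype.val ⁻¹' D : Set T).ncard = D.ncard := by
  rw [ncard_preimage_val, ncard_preimage_val, ← h.compl_eq, inter_comm, inter_comm Sᶜ,
    ← sdiff_eq, ncard_inter_add_ncard_sdiff_eq_ncard]

namespace DominatingSet

variable {V : Type*} {G H : SimpleGraph V} {D : Set V}

theorem mono (hD : DominatingSet H D) (hHG : H ≤ G) : DominatingSet G D :=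
  fun x hx ↦ (hD x hx).imp fun _ ⟨hy, hadj⟩ ↦ ⟨hy, hHG hadj⟩

theorem image_val_union {S T : Set V} {A : Set S} {B : Set T}
    (hA : DominatingSet (G.induce S) A) (hB : DominatingSet (G.induce T) B)
    (hST : Codisjoint S T) : DominatingSet G (Subtype.val '' A ∪ Subtype.val '' B) := by
  intro x hx
  rcases (hST.top_le (Set.mem_univ x) : x ∈ S ∪ T) with hxS | hxT
  · obtain ⟨a, haA, hadj⟩ := hA ⟨x, hxS⟩ fun hxA ↦ hx (Or.inl ⟨_, hxA, rfl⟩)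
    exact ⟨a, Or.inl ⟨a, haA, rfl⟩, hadj⟩
  · obtain ⟨b, hbB, hadj⟩ := hB ⟨x, hxT⟩ fun hxB ↦ hx (Or.inr ⟨_, hxB, rfl⟩)
    exact ⟨b, Or.inr ⟨b, hbB, rfl⟩, hadj⟩

theorem induce_reachable_deleteEdges (hD : DominatingSet G D) {u v : V}
    (hbridge : ¬ (G.deleteEdges {s(u, v)}).Reachable u v)
    (hu : u ∈ D ∨ ∃ w ∈ D,
      w ∈ {x : V | (G.deleteEdges {s(u, v)}).Reachable u x} ∧ G.Adj w u) :
    DominatingSet ((G.deleteEdges {s(u, v)}).induce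
        {x : V | (G.deleteEdges {s(u, v)}).Reachable u x})
      (Subtype.val ⁻¹' D) := by
  rintro ⟨x, hux⟩ hxD
  obtain ⟨w, hwD, hwx⟩ := hD x hxD
  by_cases hedge : s(w, x) = s(u, v)
  · obtain rfl : x = u := by
      rcases Sym2.eq_iff.mp hedge with ⟨-, rfl⟩ | ⟨-, rfl⟩
      · exact absurd hux hbridge
      · rfl
    obtain ⟨w', hw'D, huw', hw'x⟩ := hu.resolve_left hxD
    have hw'v : w' ≠ v := fun h ↦ hbridge (h ▸ huw')
    refine ⟨⟨w', huw'⟩, hw'D, deleteEdges_adj.mpr ⟨hw'x, ?_⟩⟩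
    simp [hw'v, hw'x.ne]
  · have hwx' : (G.deleteEdges {s(u, v)}).Adj w x := deleteEdges_adj.mpr ⟨hwx, hedge⟩
    exact ⟨⟨w, hux.trans hwx'.symm.reachable⟩, hwD, hwx'⟩

end DominatingSet

theorem dominationNumber_le {V : Type*} {G : SimpleGraph V} {D : Set V}
    (hD : DominatingSet G D) : dominationNumber G ≤ D.ncard :=
  Nat.sInf_le ⟨D, hD, rfl⟩

theorem exists_dominatingSet_ncard_eq_dominationNumber {V : Type*} (G : SimpleGraph V) :
    ∃ D : Set V, DominatingSet G D ∧ D.ncard = dominationNumber G :=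
  Nat.sInf_mem (s := {k | ∃ D : Set V, DominatingSet G D ∧ D.ncard = k})
    ⟨_, Set.univ, fun _ hv ↦ absurd (Set.mem_univ _) hv, rfl⟩

theorem dominationNumber_le_add_of_codisjoint {V : Type*} {G H : SimpleGraph V} (hHG : H ≤ G)
    {S T : Set V} (hST : Codisjoint S T) :
    dominationNumber G ≤ dominationNumber (H.induce S) + dominationNumber (H.induce T) := by
  obtain ⟨A, hA, hAcard⟩ := exists_dominatingSet_ncard_eq_dominationNumber (H.induce S)
  obtain ⟨B, hB, hBcard⟩ := exists_dominatingSet_ncard_eq_dominationNumber (H.induce T)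
  rw [← hAcard, ← hBcard]
  calc dominationNumber G ≤ (Subtype.val '' A ∪ Subtype.val '' B).ncard :=
        dominationNumber_le ((hA.image_val_union hB hST).mono hHG)
    _ ≤ (Subtype.val '' A).ncard + (Subtype.val '' B).ncard := Set.ncard_union_le _ _
    _ = A.ncard + B.ncard := by
        rw [Set.ncard_image_of_injective _ Subtype.val_injective,
          Set.ncard_image_of_injective _ Subtype.val_injective]

theorem SimpleGraph.Preconnected.reachable_deleteEdges_or {V : Type*} {G : SimpleGraph V}
    (hG : G.Preconnected) (u v x : V) :
    (G.deleteEdges {s(u, v)}).Reachable u x ∨ (G.deleteEdges {s(u, v)}).Reachable v x := by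
  induction (reachable_iff_reflTransGen u x).mp (hG u x) with
  | refl => exact .inl .rfl
  | @tail y z _ hyz ih =>
    by_cases hedge : s(y, z) = s(u, v)
    · rcases Sym2.eq_iff.mp hedge with ⟨-, rfl⟩ | ⟨-, rfl⟩
      · exact .inr .rfl
      · exact .inl .rfl
    · have hyz' : (G.deleteEdges {s(u, v)}).Adj y z := deleteEdges_adj.mpr ⟨hyz, hedge⟩
      exact ih.imp (·.trans hyz'.reachable) (·.trans hyz'.reachable)

theorem free_edge_domination_split {V : Type*} [Fintype V]
    (G : SimpleGraph V) (hT : G.IsTree) {u v : V} (huv : G.Adj u v)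
    (D : Set V) (hD : DominatingSet G D) (hmin : D.ncard = dominationNumber G)
    (hu : u ∈ D ∨ ∃ w ∈ D,
      w ∈ {x : V | (G.deleteEdges {s(u, v)}).Reachable u x} ∧ G.Adj w u)
    (hv : v ∈ D ∨ ∃ w ∈ D,
      w ∈ {x : V | (G.deleteEdges {s(u, v)}).Reachable v x} ∧ G.Adj w v) :
    DominatingSet ((G.deleteEdges {s(u, v)}).induce
        {x : V | (G.deleteEdges {s(u, v)}).Reachable u x})
      (Subtype.val ⁻¹' D) ∧
    DominatingSet ((G.deleteEdges {s(u, v)}).induce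
        {x : V | (G.deleteEdges {s(u, v)}).Reachable v x})
      (Subtype.val ⁻¹' D) ∧
    dominationNumber G =
      dominationNumber ((G.deleteEdges {s(u, v)}).induce
        {x : V | (G.deleteEdges {s(u, v)}).Reachable u x}) +
      dominationNumber ((G.deleteEdges {s(u, v)}).induce
        {x : V | (G.deleteEdges {s(u, v)}).Reachable v x}) := by
  have hbridge : ¬ (G.deleteEdges {s(u, v)}).Reachable u v :=
    isAcyclic_iff_forall_adj_isBridge.mp hT.isAcyclic huv
  have hdomu := hD.induce_reachable_deleteEdges hbridge hu
  have hdomv := hD.induce_reachable_deleteEdges (u := v) (v := u)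
    (by rwa [Sym2.eq_swap, reachable_comm]) (by rwa [Sym2.eq_swap])
  rw [Sym2.eq_swap] at hdomv
  have hsides : IsCompl {x | (G.deleteEdges {s(u, v)}).Reachable u x}
      {x | (G.deleteEdges {s(u, v)}).Reachable v x} :=
    ⟨Set.disjoint_left.mpr fun _ hux hvx ↦ hbridge (hux.trans hvx.symm),
      codisjoint_iff.mpr <| Set.eq_univ_of_forall
        (hT.connected.preconnected.reachable_deleteEdges_or u v)⟩
  refine ⟨hdomu, hdomv, le_antisymm
    (dominationNumber_le_add_of_codisjoint (deleteEdges_le _) hsides.codisjoint) ?_⟩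
  exact (add_le_add (dominationNumber_le hdomu) (dominationNumber_le hdomv)).trans_eq
    (by rw [Set.ncard_preimage_val_add_of_isCompl hsides, hmin])
end

section
/- Let b10, b11, b2, b3, b4000, b4100, b4010 be natural numbers, and set b4 = b4000 + b4100 + b4010. Assume b10 + b11 + b3 = b2 + 3·b4 + 2, b10 ≤ b2 + b4100 + b4010, and b11 ≤ b4100. Then b11/2 + 5·b2/2 + 3·b3/2 + 3·b4 + 1 < (5/2)·(b2 + b3 + b4100 + b4010), where the inequality is between rational numbers; in particular b2 + b3 + b4100 + b4010 > 0. -/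
theorem block_count_ratio (b10 b11 b2 b3 b4000 b4100 b4010 b4 : ℕ)
    (hb4 : b4 = b4000 + b4100 + b4010)
    (h1 : b10 + b11 + b3 = b2 + 3 * b4 + 2)
    (h2 : b10 ≤ b2 + b4100 + b4010)
    (h3 : b11 ≤ b4100) :
    (b11 : ℚ) / 2 + 5 * (b2 : ℚ) / 2 + 3 * (b3 : ℚ) / 2 + 3 * (b4 : ℚ) + 1 <
        (5 / 2) * ((b2 : ℚ) + (b3 : ℚ) + (b4100 : ℚ) + (b4010 : ℚ)) ∧
      0 < b2 + b3 + b4100 + b4010 := by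
  have hb4' : (b4 : ℚ) = b4000 + b4100 + b4010 := by exact_mod_cast hb4
  have h1' : (b10 : ℚ) + b11 + b3 = b2 + 3 * b4 + 2 := by exact_mod_cast h1
  have h2' : (b10 : ℚ) ≤ b2 + b4100 + b4010 := by exact_mod_cast h2
  have h3' : (b11 : ℚ) ≤ b4100 := by exact_mod_cast h3
  constructor
  · linarith
  · omega
end
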